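/- arXiv:2507.23517 — 2 statements merged into one kernel-verified Lean document; each statement's English description precedes it below -/
import Mathlib

section
/- Let G be a bridgeless graph with d(G)=4 and let uv be an edge with l_G(uv) = g*(G) ≥ 6. Then S_{1,1} = S_{2,2} = ∅, and the sets {u,v}, S_{1,2}, S_{2,1}, S_{2,3}, S_{3,2}, S_{3,3}, S_{3,4}, S_{4,3}, S_{4,4} form a partition of V(G); equivalently, for every vertex w the pair (d(w,u), d(w,v)) belongs to {(0,1),(1,0),(1,2),(2,1),(2,3),(3,2),(3,3),(3,4),(4,3),(4,4)}. -/
/-- A multigraph: vertices `V`, edges `E`, each edge has two distinct endpoints. -/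
structure Multigraph (V : Type*) (E : Type*) where
  ends : E → Sym2 V
  loopless : ∀ e, ¬ (ends e).IsDiag

namespace Multigraph

variable {V E : Type*}

/-- Adjacency in a multigraph: some edge joins `x` and `y`. -/
def Adjm (G : Multigraph V E) (x y : V) : Prop := ∃ e, G.ends e = s(x, y)

/-- The underlying simple graph of a multigraph. -/
def toSimple (G : Multigraph V E) : SimpleGraph V where
  Adj x y := x ≠ y ∧ G.Adjm x y
  symm := by
    constructor
    rintro x y ⟨hne, e, he⟩
    exact ⟨hne.symm, e, he.trans (Sym2.eq_swap)⟩
  loopless := by constructor; rintro x ⟨hne, -⟩; exact hne rfl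

/-- Distance between two vertices (length of a shortest path). -/
noncomputable def dist (G : Multigraph V E) (x y : V) : ℕ := G.toSimple.dist x y

/-- The diameter of a multigraph. -/
noncomputable def diam (G : Multigraph V E) : ℕ := sSup {n | ∃ x y, G.dist x y = n}

/-- The multigraph obtained by deleting the edge `e₀`. -/
def deleteEdge (G : Multigraph V E) (e₀ : E) : Multigraph V {e : E // e ≠ e₀} where
  ends e := G.ends e.1
  loopless e := G.loopless e.1

/-- A (connected) multigraph is bridgeless if deleting any single edge leaves it connected. -/
def Bridgeless (G : Multigraph V E) : Prop :=
  ∀ e : E, ((G.deleteEdge e).toSimple).Connected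

/-- Walks in a multigraph, recording the edges used. -/
inductive Walk (G : Multigraph V E) : V → V → Type _
  | nil {v : V} : Walk G v v
  | cons {x y z : V} (e : E) (he : G.ends e = s(x, y)) (p : Walk G y z) : Walk G x z

namespace Walk

variable {G : Multigraph V E}

/-- The length (number of edges) of a walk. -/
def length : ∀ {x y : V}, G.Walk x y → ℕ
  | _, _, .nil => 0
  | _, _, .cons _ _ p => p.length + 1

/-- The list of edges of a walk. -/
def edges : ∀ {x y : V}, G.Walk x y → List E
  | _, _, .nil => []
  | _, _, .cons e _ p => e :: p.edges

/-- The list of vertices of a walk. -/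
def support : ∀ {x y : V}, G.Walk x y → List V
  | x, _, .nil => [x]
  | x, _, .cons _ _ p => x :: p.support

/-- A closed walk is a cycle if its edges are distinct and its vertices
(other than the repeated base point) are distinct. -/
def IsCycle {v : V} (p : G.Walk v v) : Prop :=
  p.edges.Nodup ∧ p.support.tail.Nodup ∧ 0 < p.length

end Walk

/-- The edge girth of `e`: the length of a shortest cycle containing `e`. -/
noncomputable def edgeGirth (G : Multigraph V E) (e : E) : ℕ :=
  sInf {n | ∃ (v : V) (p : G.Walk v v), p.IsCycle ∧ e ∈ p.edges ∧ p.length = n}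

/-- The maximum edge girth `g*(G)`. -/
noncomputable def maxEdgeGirth (G : Multigraph V E) : ℕ :=
  sSup (Set.range fun e => G.edgeGirth e)

/-- An orientation of a multigraph: each edge is assigned a direction. -/
structure Orientation (G : Multigraph V E) where
  dir : E → V × V
  compat : ∀ e, s((dir e).1, (dir e).2) = G.ends e

/-- Arcs of an orientation. -/
def Orientation.DAdj {G : Multigraph V E} (o : G.Orientation) (x y : V) : Prop :=
  ∃ e, o.dir e = (x, y)

/-- Directed distance in an orientation (`⊤` if unreachable). -/
noncomputable def Orientation.ddist {G : Multigraph V E} (o : G.Orientation) (x y : V) : ℕ∞ :=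
  sInf {n : ℕ∞ | ∃ l : List V, List.Chain o.DAdj x l ∧
    (x :: l).getLast (List.cons_ne_nil x l) = y ∧ (l.length : ℕ∞) = n}

/-- An orientation is strong if every vertex is reachable from every vertex by a directed path. -/
def Orientation.IsStrong {G : Multigraph V E} (o : G.Orientation) : Prop :=
  ∀ x y : V, o.ddist x y ≠ ⊤

/-- The diameter of an orientation. -/
noncomputable def Orientation.odiam {G : Multigraph V E} (o : G.Orientation) : ℕ∞ :=
  ⨆ (x : V) (y : V), o.ddist x y

end Multigraph

namespace Multigraph

variable {V E : Type*}

/-- `S G u v i j` is the set of vertices at distance `i` from `u` and `j` from `v`. -/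
noncomputable def S (G : Multigraph V E) (u v : V) (i j : ℕ) : Set V :=
  {w | G.dist w u = i ∧ G.dist w v = j}

/-- The neighbourhood of a vertex. -/
def nbhd (G : Multigraph V E) (w : V) : Set V := {x | G.Adjm w x}

end Multigraph

/-!
If `w` is equidistant from the ends of the edge `e = uv`, say at distance `k`, then shortest
paths from `w` to `u` and to `v` avoid `e` (a shortest path to `u` through `uv` would reach `v`
first). Together they give a `v`–`u` walk of length `2k` in `G - e`, hence a cycle through `e`
of length at most `2k + 1`. As `l_G(uv) ≥ 6`, this forces `k ≥ 3`; the remaining constraints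
are `|d(w,u) - d(w,v)| ≤ 1` and `d(w,·) ≤ d(G) = 4`.
-/

namespace Multigraph

variable {V E : Type*} {G : Multigraph V E}

lemma ne_of_ends_eq {e : E} {u v : V} (he : G.ends e = s(u, v)) : u ≠ v :=
  fun h => G.loopless e (by rw [he, h]; exact Sym2.mk_isDiag_iff.mpr rfl)

lemma toSimple_adj_of_ends_eq {e : E} {u v : V} (he : G.ends e = s(u, v)) :
    G.toSimple.Adj u v :=
  ⟨ne_of_ends_eq he, e, he⟩

namespace Walk

noncomputable def ofToSimple : ∀ {x y : V}, G.toSimple.Walk x y → G.Walk x y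
  | _, _, .nil => .nil
  | _, _, .cons h p => .cons h.2.choose h.2.choose_spec (ofToSimple p)

@[simp]
lemma support_ofToSimple {x y : V} (p : G.toSimple.Walk x y) :
    (ofToSimple p).support = p.support := by
  induction p with
  | nil => rfl
  | cons _ _ ih => simp [ofToSimple, support, ih]

@[simp]
lemma length_ofToSimple {x y : V} (p : G.toSimple.Walk x y) :
    (ofToSimple p).length = p.length := by
  induction p with
  | nil => rfl
  | cons _ _ ih => simp [ofToSimple, length, ih]

lemma map_ends_edges_ofToSimple {x y : V} (p : G.toSimple.Walk x y) :
    (ofToSimple p).edges.map G.ends = p.edges := by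
  induction p with
  | nil => rfl
  | cons h _ ih => simp [ofToSimple, edges, ih, h.2.choose_spec]

def ofDeleteEdge {e₀ : E} : ∀ {x y : V}, (G.deleteEdge e₀).Walk x y → G.Walk x y
  | _, _, .nil => .nil
  | _, _, .cons f hf p => .cons f.1 hf (ofDeleteEdge p)

@[simp]
lemma support_ofDeleteEdge {e₀ : E} {x y : V} (p : (G.deleteEdge e₀).Walk x y) :
    (ofDeleteEdge p).support = p.support := by
  induction p with
  | nil => rfl
  | cons _ _ _ ih => simp [ofDeleteEdge, support, ih]

@[simp]
lemma length_ofDeleteEdge {e₀ : E} {x y : V} (p : (G.deleteEdge e₀).Walk x y) :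
    (ofDeleteEdge p).length = p.length := by
  induction p with
  | nil => rfl
  | cons _ _ _ ih => simp [ofDeleteEdge, length, ih]

@[simp]
lemma edges_ofDeleteEdge {e₀ : E} {x y : V} (p : (G.deleteEdge e₀).Walk x y) :
    (ofDeleteEdge p).edges = p.edges.map Subtype.val := by
  induction p with
  | nil => rfl
  | cons _ _ _ ih => simp [ofDeleteEdge, edges, ih]

end Walk

lemma edgeGirth_le_length_add_one {e : E} {u v : V} (he : G.ends e = s(u, v))
    (p : (G.deleteEdge e).toSimple.Walk v u) : G.edgeGirth e ≤ p.length + 1 := by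
  classical
  have hpath := p.bypass_isPath
  set q : (G.deleteEdge e).Walk v u := Walk.ofToSimple p.bypass
  have hq : q.edges.Nodup :=
    List.Nodup.of_map _ (by rw [Walk.map_ends_edges_ofToSimple]; exact hpath.isTrail.edges_nodup)
  have hcycle : (Walk.cons e he (Walk.ofDeleteEdge q)).IsCycle := by
    refine ⟨?_, ?_, by simp [Walk.length]⟩
    · simp only [Walk.edges, Walk.edges_ofDeleteEdge, List.nodup_cons, List.mem_map]
      exact ⟨fun ⟨f, _, hf⟩ => f.2 hf, hq.map Subtype.val_injective⟩
    · simpa [Walk.support, q] using hpath.support_nodup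
  calc G.edgeGirth e ≤ (Walk.cons e he (Walk.ofDeleteEdge q)).length :=
        Nat.sInf_le ⟨u, _, hcycle, by simp [Walk.edges], rfl⟩
    _ ≤ p.length + 1 := by
        simpa [Walk.length, q] using p.length_bypass_le_length

lemma deleteEdges_toSimple_le_toSimple_deleteEdge (e : E) :
    G.toSimple.deleteEdges {G.ends e} ≤ (G.deleteEdge e).toSimple := by
  rintro x y ⟨⟨hxy, f, hf⟩, hne⟩
  exact ⟨hxy, ⟨f, fun hfe => hne ⟨hfe ▸ hf.symm, hxy⟩⟩, hf⟩

lemma exists_walk_deleteEdge_length_eq_dist (hconn : G.toSimple.Connected) {e : E} {u v : V}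
    (he : G.ends e = s(u, v)) {w : V} (hwuv : G.dist w u ≤ G.dist w v) :
    ∃ p : (G.deleteEdge e).toSimple.Walk w u, p.length = G.dist w u := by
  classical
  obtain ⟨p, hp⟩ := hconn.exists_walk_length_eq_dist w u
  have hep : G.ends e ∉ p.edges := by
    intro hmem
    rw [he] at hmem
    have hv := p.snd_mem_support_of_mem_edges hmem
    have hlt := p.length_takeUntil_lt_length hv (ne_of_ends_eq he).symm
    have := SimpleGraph.dist_le (p.takeUntil v hv)
    unfold Multigraph.dist at hwuv
    omega
  refine ⟨(p.toDeleteEdge (G.ends e) hep).mapLe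
    (deleteEdges_toSimple_le_toSimple_deleteEdge e), ?_⟩
  simp only [SimpleGraph.Walk.length_mapLe, SimpleGraph.Walk.length_transfer]
  exact hp

theorem edgeGirth_le_two_mul_dist_add_one (hconn : G.toSimple.Connected) {e : E} {u v : V}
    (he : G.ends e = s(u, v)) {w : V} (hwuv : G.dist w u = G.dist w v) :
    G.edgeGirth e ≤ 2 * G.dist w u + 1 := by
  obtain ⟨pu, hpu⟩ := exists_walk_deleteEdge_length_eq_dist hconn he hwuv.le
  obtain ⟨pv, hpv⟩ := exists_walk_deleteEdge_length_eq_dist hconn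
    (he.trans Sym2.eq_swap) hwuv.ge
  have := edgeGirth_le_length_add_one he (pv.reverse.append pu)
  simp only [SimpleGraph.Walk.length_append, SimpleGraph.Walk.length_reverse] at this
  omega

lemma dist_le_diam [Finite V] (x y : V) : G.dist x y ≤ G.diam :=
  le_csSup ((Set.finite_range fun p : V × V => G.dist p.1 p.2).subset
    (by rintro _ ⟨a, b, rfl⟩; exact ⟨(a, b), rfl⟩)).bddAbove ⟨x, y, rfl⟩

end Multigraph

theorem stmt11_general {V E : Type*} [Fintype V] (G : Multigraph V E)
    (hconn : G.toSimple.Connected) (hdiam : G.diam = 4)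
    (u v : V) (e : E) (he : G.ends e = s(u, v))
    (hmax : G.edgeGirth e = G.maxEdgeGirth) (h6 : 6 ≤ G.maxEdgeGirth) :
    ∀ w : V, (G.dist w u, G.dist w v) ∈
      ({(0,1), (1,0), (1,2), (2,1), (2,3), (3,2), (3,3), (3,4), (4,3), (4,4)} :
        Set (ℕ × ℕ)) := by
  intro w
  have hequal : G.dist w u = G.dist w v → 3 ≤ G.dist w u := fun h => by
    have := Multigraph.edgeGirth_le_two_mul_dist_add_one hconn he h
    omega
  have hu : G.dist w u ≤ 4 := hdiam ▸ Multigraph.dist_le_diam (G := G) w u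
  have hv : G.dist w v ≤ 4 := hdiam ▸ Multigraph.dist_le_diam (G := G) w v
  have hstep : G.dist w v = G.dist w u ∨ G.dist w v = G.dist w u + 1 ∨
      G.dist w v = G.dist w u - 1 := (Multigraph.toSimple_adj_of_ends_eq he).diff_dist_adj
  simp only [Set.mem_insert_iff, Set.mem_singleton_iff, Prod.mk.injEq]
  generalize G.dist w u = i, G.dist w v = j at *
  interval_cases i <;> interval_cases j <;> omega

/-- Let `G` be a bridgeless graph with `d(G) = 4` and let `uv` be an edge
with `l_G(uv) = g*(G) ≥ 6`. Then `S₁₁ = S₂₂ = ∅` and the sets `{u,v}`, `S₁₂`, `S₂₁`, `S₂₃`,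
`S₃₂`, `S₃₃`, `S₃₄`, `S₄₃`, `S₄₄` partition `V(G)`; equivalently, for every vertex `w` the
pair `(d(w,u), d(w,v))` belongs to
`{(0,1),(1,0),(1,2),(2,1),(2,3),(3,2),(3,3),(3,4),(4,3),(4,4)}`. -/
theorem stmt11 {V E : Type*} [Fintype V] [Fintype E] (G : Multigraph V E)
    (hconn : G.toSimple.Connected) (hbridgeless : G.Bridgeless) (hdiam : G.diam = 4)
    (u v : V) (e : E) (he : G.ends e = s(u, v))
    (hmax : G.edgeGirth e = G.maxEdgeGirth) (h6 : 6 ≤ G.maxEdgeGirth) :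
    ∀ w : V, (G.dist w u, G.dist w v) ∈
      ({(0,1), (1,0), (1,2), (2,1), (2,3), (3,2), (3,3), (3,4), (4,3), (4,4)} :
        Set (ℕ × ℕ)) :=
  stmt11_general G hconn hdiam u v e he hmax h6
end

section
/- Let G be a bridgeless graph with d(G)=4 and let uv be an edge with l_G(uv) = g*(G) = 9. Then for every x ∈ S_{3,2} and every y ∈ S_{2,3}, d(x,y) = 4, and every shortest path x w_1 w_2 w_3 y from x to y satisfies w_1 ∈ S_{4,3}, w_2 ∈ S_{4,4} and w_3 ∈ S_{3,4}. -/
/-! Let `H = G - uv`. Since `l_G(uv) = 9`, every `u`–`v` path in `H` has length at least 8, and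
for every vertex `w` we have `d_G(w, u) = min (d_H(w, u), d_H(w, v) + 1)`: a shortest path from `w`
to `u` either avoids `v`, and then lies in `H`, or passes through `v` just before `u`.

For `x ∈ S₃₂` a shortest path to `v` cannot pass through `u`, so `d_H(x, v) = 2`; likewise
`d_H(y, u) = 2`, hence `d_H(x, y) ≥ 8 - 2 - 2 = 4`. A shortest `x`–`y` path has length at most
`d(G) = 4 < d(x, u) + d(u, y)`, so it avoids `u` and `d(x, y) ≥ d_H(x, y) ≥ 4`. Along a path
`x w₁ w₂ w₃ y`, which avoids `u` and so lies in `H`, the `H`-distances from `wᵢ` to `u` and `v`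
are bounded via `x` and `y` by numbers summing to 8; as `d_H(u, v) ≥ 8` these bounds are attained,
and the formula above turns them into the claimed `G`-distances. -/

namespace SimpleGraph.Walk

variable {W : Type*} {G : SimpleGraph W} {a b m : W}

lemma dist_add_dist_le_length (p : G.Walk a b) (hm : m ∈ p.support) :
    G.dist a m + G.dist m b ≤ p.length := by
  classical
  calc G.dist a m + G.dist m b
      ≤ (p.takeUntil m hm).length + (p.dropUntil m hm).length :=
        Nat.add_le_add (dist_le _) (dist_le _)
    _ = p.length := by rw [← length_append, take_spec]

end SimpleGraph.Walk

namespace Multigraph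

variable {V E : Type*} {G : Multigraph V E} {e : E} {u v a b c : V}

lemma dist_self : G.dist a a = 0 := SimpleGraph.dist_self

lemma dist_comm : G.dist a b = G.dist b a := SimpleGraph.dist_comm

lemma dist_triangle (hG : G.toSimple.Connected) : G.dist a c ≤ G.dist a b + G.dist b c :=
  hG.dist_triangle

lemma dist_le_diam_s17 [Finite V] (G : Multigraph V E) (a b : V) : G.dist a b ≤ G.diam := by
  have hfin : {n | ∃ a b : V, G.dist a b = n}.Finite :=
    (Set.finite_range fun p : V × V => G.dist p.1 p.2).subset (by
      rintro _ ⟨a, b, rfl⟩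
      exact ⟨(a, b), rfl⟩)
  exact le_csSup hfin.bddAbove ⟨a, b, rfl⟩

lemma Adjm.adj (h : G.Adjm a b) : G.toSimple.Adj a b := by
  obtain ⟨f, hf⟩ := h
  refine ⟨fun hab => G.loopless f ?_, f, hf⟩
  rw [hf, hab]
  exact Sym2.mk_isDiag_iff.mpr rfl

lemma Adjm.dist_eq_one (h : G.Adjm a b) : G.dist a b = 1 :=
  SimpleGraph.dist_eq_one_iff_adj.mpr h.adj

namespace Walk

lemma start_mem_support (p : G.Walk a b) : a ∈ p.support := by
  cases p <;> exact List.mem_cons_self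

lemma mem_support_of_mem_ends (p : G.Walk a b) {f : E} (hf : f ∈ p.edges) {z : V}
    (hz : z ∈ G.ends f) : z ∈ p.support := by
  induction p with
  | nil => cases hf
  | cons f' hf' p ih =>
    rcases List.mem_cons.mp hf with rfl | hf
    · rw [hf'] at hz
      rcases Sym2.mem_iff.mp hz with rfl | rfl
      · exact List.mem_cons_self
      · exact List.mem_cons_of_mem _ p.start_mem_support
    · exact List.mem_cons_of_mem _ (ih hf)

lemma edges_nodup_of_support_nodup (p : G.Walk a b) (h : p.support.Nodup) : p.edges.Nodup := by
  induction p with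
  | nil => exact List.nodup_nil
  | cons f hf p ih =>
    rw [support, List.nodup_cons] at h
    exact List.nodup_cons.mpr
      ⟨fun hmem => h.1 (p.mem_support_of_mem_ends hmem (hf ▸ Sym2.mem_mk_left _ _)), ih h.2⟩

end Walk

local notation "G₋" => toSimple (deleteEdge G e)

lemma toSimple_deleteEdge_le : G₋ ≤ G.toSimple :=
  fun _ _ ⟨hne, f, hf⟩ => ⟨hne, f.1, hf⟩

lemma deleteEdge_adj_of_adj (he : G.ends e = s(u, v)) (hab : G.toSimple.Adj a b)
    (ha : a ≠ u) (hb : b ≠ u) : G₋.Adj a b := by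
  obtain ⟨hne, f, hf⟩ := hab
  refine ⟨hne, ⟨f, ?_⟩, hf⟩
  rintro rfl
  have hu : u ∈ s(a, b) := hf ▸ he ▸ Sym2.mem_mk_left u v
  rcases Sym2.mem_iff.mp hu with rfl | rfl
  · exact ha rfl
  · exact hb rfl

lemma dist_deleteEdge_le_one (he : G.ends e = s(u, v)) (hab : G.Adjm a b) (ha : a ≠ u)
    (hb : b ≠ u) : G₋.dist a b ≤ 1 :=
  (SimpleGraph.dist_eq_one_iff_adj.mpr (deleteEdge_adj_of_adj he hab.adj ha hb)).le

lemma dist_deleteEdge_le_length (he : G.ends e = s(u, v)) (p : G.toSimple.Walk a b)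
    (hu : u ∉ p.support) : G₋.dist a b ≤ p.length := by
  refine (SimpleGraph.dist_le (p.transfer _ fun s hs => ?_)).trans_eq (p.length_transfer _)
  induction s using Sym2.ind with
  | _ c d =>
    exact deleteEdge_adj_of_adj he (p.adj_of_mem_edges hs)
      (fun h => hu (h ▸ p.fst_mem_support_of_mem_edges hs))
      (fun h => hu (h ▸ p.snd_mem_support_of_mem_edges hs))

lemma dist_deleteEdge_le_of_lt (hG : G.toSimple.Connected) (he : G.ends e = s(u, v))
    (h : G.dist a b < G.dist a u + G.dist u b) : G₋.dist a b ≤ G.dist a b := by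
  obtain ⟨p, hp⟩ := hG.exists_walk_length_eq_dist a b
  have hu : u ∉ p.support := fun hu => by
    have := p.dist_add_dist_le_length hu
    unfold Multigraph.dist at h
    omega
  exact (dist_deleteEdge_le_length he p hu).trans_eq hp

lemma exists_walk_of_deleteEdge (p : G₋.Walk a b) :
    ∃ q : G.Walk a b, q.length = p.length ∧ q.support = p.support ∧ e ∉ q.edges := by
  induction p with
  | nil => exact ⟨.nil, rfl, rfl, List.not_mem_nil⟩
  | cons hadj _ ih =>
    obtain ⟨q, hql, hqs, hqe⟩ := ih
    obtain ⟨-, f, hf⟩ := hadj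
    exact ⟨.cons f.1 hf q, congrArg (· + 1) hql, congrArg (_ :: ·) hqs,
      List.not_mem_cons_of_ne_of_not_mem f.2.symm hqe⟩

lemma edgeGirth_le_dist_deleteEdge_add_one (he : G.ends e = s(u, v)) (h : G₋.Reachable v u) :
    G.edgeGirth e ≤ G₋.dist v u + 1 := by
  obtain ⟨p, hp, hlen⟩ := h.exists_path_of_dist
  obtain ⟨q, hql, hqs, hqe⟩ := exists_walk_of_deleteEdge p
  have hnodup : q.support.Nodup := hqs ▸ hp.support_nodup
  refine Nat.sInf_le ⟨u, .cons e he q, ⟨?_, hnodup, Nat.succ_pos _⟩, List.mem_cons_self, ?_⟩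
  · exact List.nodup_cons.mpr ⟨hqe, q.edges_nodup_of_support_nodup hnodup⟩
  · exact congrArg (· + 1) (hql.trans hlen)

lemma dist_deleteEdge_le_one_of_adjm_chain (hG : G.toSimple.Connected) (he : G.ends e = s(u, v))
    {x y w₁ w₂ w₃ : V} (hx : G.dist x u = 3) (hy : G.dist y u = 2) (h₁ : G.Adjm x w₁)
    (h₂ : G.Adjm w₁ w₂) (h₃ : G.Adjm w₂ w₃) (h₄ : G.Adjm w₃ y) :
    G₋.dist x w₁ ≤ 1 ∧ G₋.dist w₁ w₂ ≤ 1 ∧ G₋.dist w₂ w₃ ≤ 1 ∧ G₋.dist w₃ y ≤ 1 := by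
  have ne_u (w : V) (hw : G.dist x w ≤ 2 ∨ G.dist w y ≤ 1) : w ≠ u := by
    rintro rfl
    rw [dist_comm (a := w)] at hw
    omega
  have d₁ := h₁.dist_eq_one
  have d₂ := h₂.dist_eq_one
  have d₄ := h₄.dist_eq_one
  have d₁₂ : G.dist x w₂ ≤ G.dist x w₁ + G.dist w₁ w₂ := dist_triangle hG
  have hxu := ne_u x (Or.inl (dist_self.trans_le (by omega)))
  have hyu := ne_u y (Or.inr (dist_self.trans_le (by omega)))
  exact ⟨dist_deleteEdge_le_one he h₁ hxu (ne_u w₁ (by omega)),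
    dist_deleteEdge_le_one he h₂ (ne_u w₁ (by omega)) (ne_u w₂ (by omega)),
    dist_deleteEdge_le_one he h₃ (ne_u w₂ (by omega)) (ne_u w₃ (by omega)),
    dist_deleteEdge_le_one he h₄ (ne_u w₃ (by omega)) hyu⟩

section Connected

variable (hH : (G.deleteEdge e).toSimple.Connected) (he : G.ends e = s(u, v))
include hH he

lemma dist_deleteEdge_le_of_dist_le (h : G.dist a v ≤ G.dist a u) : G₋.dist a v ≤ G.dist a v :=
  dist_deleteEdge_le_of_lt (hH.mono toSimple_deleteEdge_le) he
    (by rw [(Adjm.dist_eq_one ⟨e, he⟩ : G.dist u v = 1)]; omega)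

lemma dist_eq_min_dist_deleteEdge (w : V) :
    G.dist w u = min (G₋.dist w u) (G₋.dist w v + 1) := by
  have hG := hH.mono toSimple_deleteEdge_le
  have hvu : G.dist v u = 1 := Adjm.dist_eq_one ⟨e, he.trans Sym2.eq_swap⟩
  have hle_u : G.dist w u ≤ G₋.dist w u := (hH.preconnected w u).dist_anti toSimple_deleteEdge_le
  have hle_v : G.dist w v ≤ G₋.dist w v := (hH.preconnected w v).dist_anti toSimple_deleteEdge_le
  have htri : G.dist w u ≤ G.dist w v + G.dist v u := dist_triangle hG
  rcases Nat.lt_or_eq_of_le htri with hlt | heq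
  · have := dist_deleteEdge_le_of_lt hG (he.trans Sym2.eq_swap) hlt
    omega
  · have := dist_deleteEdge_le_of_dist_le hH he (a := w) (by omega)
    omega

/-- The hypotheses put `w` on a shortest `u`–`v` path of `G - e`, at distances exactly `i` and `j`
from `u` and `v`. -/
lemma mem_S_of_dist_deleteEdge_le {w : V} {i j : ℕ} (hij : i + j ≤ G₋.dist u v)
    (hi : G₋.dist w u ≤ i) (hj : G₋.dist w v ≤ j) :
    w ∈ G.S u v (min i (j + 1)) (min j (i + 1)) := by
  have htri : G₋.dist u v ≤ G₋.dist w u + G₋.dist w v :=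
    SimpleGraph.dist_comm (u := u) ▸ hH.dist_triangle
  constructor
  · rw [dist_eq_min_dist_deleteEdge hH he w]
    omega
  · rw [dist_eq_min_dist_deleteEdge hH (he.trans Sym2.eq_swap) w]
    omega

lemma dist_eq_four_of_mem_S [Finite V] (huv : 8 ≤ G₋.dist u v) (hdiam : G.diam = 4) {x y : V}
    (hx : x ∈ G.S u v 3 2) (hy : y ∈ G.S u v 2 3) : G.dist x y = 4 := by
  obtain ⟨hxu, hxv⟩ := hx
  obtain ⟨hyu, hyv⟩ := hy
  have hG := hH.mono toSimple_deleteEdge_le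
  have hxv' := dist_deleteEdge_le_of_dist_le hH he (a := x) (by omega)
  have hyu' := dist_deleteEdge_le_of_dist_le hH (he.trans Sym2.eq_swap) (a := y) (by omega)
  have hxy : G.dist x y ≤ 4 := hdiam ▸ G.dist_le_diam_s17 x y
  have hxy' : G₋.dist x y ≤ G.dist x y :=
    dist_deleteEdge_le_of_lt hG he (by rw [dist_comm (a := u)]; omega)
  have h₁ : G₋.dist u v ≤ G₋.dist u y + G₋.dist y v := hH.dist_triangle
  have h₂ : G₋.dist y v ≤ G₋.dist y x + G₋.dist x v := hH.dist_triangle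
  have := SimpleGraph.dist_comm (G := G₋) (u := u) (v := y)
  have := SimpleGraph.dist_comm (G := G₋) (u := y) (v := x)
  omega

lemma mem_S_of_adjm_chain (huv : 8 ≤ G₋.dist u v) {x y w₁ w₂ w₃ : V}
    (hx : x ∈ G.S u v 3 2) (hy : y ∈ G.S u v 2 3) (h₁ : G.Adjm x w₁) (h₂ : G.Adjm w₁ w₂)
    (h₃ : G.Adjm w₂ w₃) (h₄ : G.Adjm w₃ y) :
    w₁ ∈ G.S u v 4 3 ∧ w₂ ∈ G.S u v 4 4 ∧ w₃ ∈ G.S u v 3 4 := by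
  obtain ⟨hxu, hxv⟩ := hx
  obtain ⟨hyu, hyv⟩ := hy
  have hxv' := dist_deleteEdge_le_of_dist_le hH he (a := x) (by omega)
  have hyu' := dist_deleteEdge_le_of_dist_le hH (he.trans Sym2.eq_swap) (a := y) (by omega)
  obtain ⟨s₁, s₂, s₃, s₄⟩ := dist_deleteEdge_le_one_of_adjm_chain
    (hH.mono toSimple_deleteEdge_le) he hxu hyu h₁ h₂ h₃ h₄
  have htri (a b c : V) : G₋.dist a c ≤ G₋.dist a b + G₋.dist b c := hH.dist_triangle
  have hcomm (a b : V) : G₋.dist a b = G₋.dist b a := SimpleGraph.dist_comm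
  refine ⟨mem_S_of_dist_deleteEdge_le hH he (i := 5) (j := 3) huv ?_ ?_,
    mem_S_of_dist_deleteEdge_le hH he (i := 4) (j := 4) huv ?_ ?_,
    mem_S_of_dist_deleteEdge_le hH he (i := 3) (j := 5) huv ?_ ?_⟩
  · have := htri w₁ w₂ u; have := htri w₂ w₃ u; have := htri w₃ y u; omega
  · have := htri w₁ x v; have := hcomm w₁ x; omega
  · have := htri w₂ w₃ u; have := htri w₃ y u; omega
  · have := htri w₂ w₁ v; have := htri w₁ x v; have := hcomm w₂ w₁; have := hcomm w₁ x; omega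
  · have := htri w₃ y u; omega
  · have := htri w₃ w₂ v; have := htri w₂ w₁ v; have := htri w₁ x v
    have := hcomm w₃ w₂; have := hcomm w₂ w₁; have := hcomm w₁ x; omega

end Connected

end Multigraph

theorem stmt17_general {V E : Type*} [Fintype V] (G : Multigraph V E)
    (hbridgeless : G.Bridgeless) (hdiam : G.diam = 4)
    (u v : V) (e : E) (he : G.ends e = s(u, v))
    (hmax : G.edgeGirth e = G.maxEdgeGirth) (h9 : G.maxEdgeGirth = 9) :
    ∀ x ∈ G.S u v 3 2, ∀ y ∈ G.S u v 2 3,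
      G.dist x y = 4 ∧
      ∀ w1 w2 w3 : V, G.Adjm x w1 → G.Adjm w1 w2 → G.Adjm w2 w3 → G.Adjm w3 y →
        w1 ∈ G.S u v 4 3 ∧ w2 ∈ G.S u v 4 4 ∧ w3 ∈ G.S u v 3 4 := by
  intro x hx y hy
  have hH : (G.deleteEdge e).toSimple.Connected := hbridgeless e
  have huv : 8 ≤ (G.deleteEdge e).toSimple.dist u v := by
    have := Multigraph.edgeGirth_le_dist_deleteEdge_add_one he (hH.preconnected v u)
    rw [hmax, h9, SimpleGraph.dist_comm] at this
    omega
  exact ⟨Multigraph.dist_eq_four_of_mem_S hH he huv hdiam hx hy,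
    fun _ _ _ => Multigraph.mem_S_of_adjm_chain hH he huv hx hy⟩

/-- Let `G` be a bridgeless graph with `d(G) = 4` and let `uv` be an edge
with `l_G(uv) = g*(G) = 9`. Then for every `x ∈ S₃₂` and every `y ∈ S₂₃` we have
`d(x, y) = 4`, and every shortest path `x w₁ w₂ w₃ y` from `x` to `y` satisfies
`w₁ ∈ S₄₃`, `w₂ ∈ S₄₄` and `w₃ ∈ S₃₄`. -/
theorem stmt17 {V E : Type*} [Fintype V] [Fintype E] (G : Multigraph V E)
    (hconn : G.toSimple.Connected) (hbridgeless : G.Bridgeless) (hdiam : G.diam = 4)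
    (u v : V) (e : E) (he : G.ends e = s(u, v))
    (hmax : G.edgeGirth e = G.maxEdgeGirth) (h9 : G.maxEdgeGirth = 9) :
    ∀ x ∈ G.S u v 3 2, ∀ y ∈ G.S u v 2 3,
      G.dist x y = 4 ∧
      ∀ w1 w2 w3 : V, G.Adjm x w1 → G.Adjm w1 w2 → G.Adjm w2 w3 → G.Adjm w3 y →
        w1 ∈ G.S u v 4 3 ∧ w2 ∈ G.S u v 4 4 ∧ w3 ∈ G.S u v 3 4 :=
  stmt17_general G hbridgeless hdiam u v e he hmax h9
end
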